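/- arXiv:2012.13105 — 3 statements merged into one kernel-verified Lean document; each statement's English description precedes it below -/
import Mathlib

section
/- Error representation of the first-order standard Trotter formula: for every h ≥ 0 one has U_{s,1}(h,0) - U(h,0) = ∫₀^h U(h,s) · exp(-i s f2(s) H2) · E_{s,1}(s) · exp(-i s f1(s) H1) ds, where for r ≥ 0, E_{s,1}(r) = ∫₀^r f1(r) f2(s) · exp(i s f2(s) H2) [H1,H2] exp(-i s f2(s) H2) ds - i r f1'(r) H1 - i r f2'(r) H2 + ∫₀^r s f1(r) f2'(s) · exp(i s f2(s) H2) [H1,H2] exp(-i s f2(s) H2) ds. -/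
/-!
Duhamel's principle: if `V' = -i H V + R`, then `V(h) - U(h,0) V(0) = ∫₀^h U(h,s) R(s) ds`,
because `U(t,0)ᴴ V(t)` has derivative `U(t,0)ᴴ R(t)` and `U` is unitary (as `H(t)` is Hermitian).
The Trotter step `V(t) = U_{s,1}(t,0)` satisfies such an equation with
`R(t) = exp(-i t f2(t) H2) E_{s,1}(t) exp(-i t f1(t) H1)`: the derivative of
`r ↦ exp(i r f2(r) H2) H1 exp(-i r f2(r) H2)` is `-i (f2(r) + r f2'(r))` times the conjugated
commutator, so the two integrals in `E_{s,1}(t)` add up to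
`i f1(t) (exp(i t f2(t) H2) H1 exp(-i t f2(t) H2) - H1)`.
-/

open scoped Matrix.Norms.L2Operator
open MeasureTheory

noncomputable section

/-- Square `n × n` complex matrices. -/
abbrev Mat (n : ℕ) := Matrix (Fin n) (Fin n) ℂ

/-- The matrix exponential. -/
noncomputable def mexp {n : ℕ} (A : Mat n) : Mat n := NormedSpace.exp A

/-- The commutator `[A,B] = AB - BA`. -/
def matComm {n : ℕ} (A B : Mat n) : Mat n := A * B - B * A

/-- The time-dependent Hamiltonian `H(t) = f1(t) H1 + f2(t) H2`. -/
def Ham {n : ℕ} (H1 H2 : Mat n) (f1 f2 : ℝ → ℝ) (t : ℝ) : Mat n :=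
  (f1 t : ℂ) • H1 + (f2 t : ℂ) • H2

/-- `IsEvolution H1 H2 f1 f2 U` : `U t s` is the evolution operator, i.e. it solves
`∂ₜ U(t,s) = -i H(t) U(t,s)` with `U(s,s) = I`. -/
def IsEvolution {n : ℕ} (H1 H2 : Mat n) (f1 f2 : ℝ → ℝ) (U : ℝ → ℝ → Mat n) : Prop :=
  (∀ s : ℝ, U s s = 1) ∧
    ∀ s t : ℝ, HasDerivAt (fun τ => U τ s) ((-Complex.I) • (Ham H1 H2 f1 f2 t * U t s)) t

/-- First-order standard Trotter step from time `a` to time `b`: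
`U_{s,1}(b,a) = exp(-i (b-a) f2(b) H2) exp(-i (b-a) f1(b) H1)`. -/
noncomputable def Us1 {n : ℕ} (H1 H2 : Mat n) (f1 f2 : ℝ → ℝ) (b a : ℝ) : Mat n :=
  mexp ((-Complex.I * (((b - a) * f2 b : ℝ) : ℂ)) • H2) *
    mexp ((-Complex.I * (((b - a) * f1 b : ℝ) : ℂ)) • H1)

/-- First-order generalized Trotter step from time `a` to time `b`:
`U_{g,1}(b,a) = exp(-i (∫_a^b f2) H2) exp(-i (∫_a^b f1) H1)`. -/
noncomputable def Ug1 {n : ℕ} (H1 H2 : Mat n) (f1 f2 : ℝ → ℝ) (b a : ℝ) : Mat n :=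
  mexp ((-Complex.I * ((∫ s in a..b, f2 s : ℝ) : ℂ)) • H2) *
    mexp ((-Complex.I * ((∫ s in a..b, f1 s : ℝ) : ℂ)) • H1)

/-- Second-order standard Trotter step from time `a` to time `b` (with midpoint `(a+b)/2`):
`U_{s,2}(b,a) = exp(-i (b-a)/2 f1((a+b)/2) H1) exp(-i (b-a) f2((a+b)/2) H2)
  exp(-i (b-a)/2 f1((a+b)/2) H1)`. -/
noncomputable def Us2 {n : ℕ} (H1 H2 : Mat n) (f1 f2 : ℝ → ℝ) (b a : ℝ) : Mat n :=
  mexp ((-Complex.I * (((b - a) / 2 * f1 ((a + b) / 2) : ℝ) : ℂ)) • H1) *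
    mexp ((-Complex.I * (((b - a) * f2 ((a + b) / 2) : ℝ) : ℂ)) • H2) *
    mexp ((-Complex.I * (((b - a) / 2 * f1 ((a + b) / 2) : ℝ) : ℂ)) • H1)

/-- Second-order generalized Trotter step from time `a` to time `b`:
`U_{g,2}(b,a) = exp(-i (∫_{(a+b)/2}^b f1) H1) exp(-i (∫_a^b f2) H2)
  exp(-i (∫_a^{(a+b)/2} f1) H1)`. -/
noncomputable def Ug2 {n : ℕ} (H1 H2 : Mat n) (f1 f2 : ℝ → ℝ) (b a : ℝ) : Mat n :=
  mexp ((-Complex.I * ((∫ s in ((a + b) / 2)..b, f1 s : ℝ) : ℂ)) • H1) *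
    mexp ((-Complex.I * ((∫ s in a..b, f2 s : ℝ) : ℂ)) • H2) *
    mexp ((-Complex.I * ((∫ s in a..((a + b) / 2), f1 s : ℝ) : ℂ)) • H1)

/-- The integrand appearing in the error representation of the first-order standard Trotter
formula. -/
noncomputable def Es1 {n : ℕ} (H1 H2 : Mat n) (f1 f2 : ℝ → ℝ) (r : ℝ) : Mat n :=
  (∫ s in (0:ℝ)..r, ((f1 r * f2 s : ℝ) : ℂ) •
      (mexp ((Complex.I * ((s * f2 s : ℝ) : ℂ)) • H2) * matComm H1 H2 *
        mexp ((-Complex.I * ((s * f2 s : ℝ) : ℂ)) • H2)))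
    - (Complex.I * ((r * deriv f1 r : ℝ) : ℂ)) • H1
    - (Complex.I * ((r * deriv f2 r : ℝ) : ℂ)) • H2
    + ∫ s in (0:ℝ)..r, ((s * f1 r * deriv f2 s : ℝ) : ℂ) •
      (mexp ((Complex.I * ((s * f2 s : ℝ) : ℂ)) • H2) * matComm H1 H2 *
        mexp ((-Complex.I * ((s * f2 s : ℝ) : ℂ)) • H2))

open Matrix
open Complex (I)

theorem hasDerivAt_id_mul {f : ℝ → ℝ} (hf : Differentiable ℝ f) (t : ℝ) :
    HasDerivAt (fun s => s * f s) (f t + t * deriv f t) t :=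
  ((hasDerivAt_id' t).mul (hf t).hasDerivAt).congr_deriv (by rw [one_mul])

section Exponential

variable {n : ℕ}

theorem mexp_zero : mexp (0 : Mat n) = 1 := NormedSpace.exp_zero

theorem commute_mexp_smul (A : Mat n) (c : ℂ) : Commute A (mexp (c • A)) :=
  ((Commute.refl A).smul_right c).exp_right

theorem mexp_smul_mul_mexp_neg_smul (A : Mat n) (c : ℂ) : mexp (c • A) * mexp (-c • A) = 1 := by
  rw [mexp, mexp, ← Matrix.exp_add_of_commute _ _ (((Commute.refl A).smul_right _).smul_left _),
    ← add_smul, add_neg_cancel, zero_smul, NormedSpace.exp_zero]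

theorem HasDerivAt.mexp_smul {φ : ℝ → ℂ} {φ' : ℂ} {t : ℝ} (hφ : HasDerivAt φ φ' t)
    (A : Mat n) : HasDerivAt (fun s => mexp (φ s • A)) (φ' • (A * mexp (φ t • A))) t := by
  simpa [mexp, Function.comp_def] using
    (hasDerivAt_exp_smul_const' (𝕂 := ℂ) A (φ t)).scomp t hφ

theorem continuous_mexp_smul {φ : ℝ → ℂ} (hφ : Differentiable ℝ φ) (A : Mat n) :
    Continuous fun t => mexp (φ t • A) :=
  continuous_iff_continuousAt.2 fun t => ((hφ t).hasDerivAt.mexp_smul A).continuousAt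

theorem continuous_mexp_conj {φ : ℝ → ℝ} (hφ : Differentiable ℝ φ) (A B : Mat n) :
    Continuous fun t => mexp ((I * φ t) • B) * A * mexp ((-I * φ t) • B) := by
  have hφℂ : Differentiable ℝ fun t => (φ t : ℂ) := fun t =>
    (hφ t).hasDerivAt.ofReal_comp.differentiableAt
  exact ((continuous_mexp_smul (hφℂ.const_mul I) B).mul continuous_const).mul
    (continuous_mexp_smul (hφℂ.const_mul (-I)) B)

theorem hasDerivAt_mexp_conj {φ : ℝ → ℝ} {φ' t : ℝ} (hφ : HasDerivAt φ φ' t) (A B : Mat n) :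
    HasDerivAt (fun s => mexp ((I * φ s) • B) * A * mexp ((-I * φ s) • B))
      ((-I * φ') • (mexp ((I * φ t) • B) * matComm A B * mexp ((-I * φ t) • B))) t := by
  have hplus := (hφ.ofReal_comp.const_mul I).mexp_smul B
  have hminus := (hφ.ofReal_comp.const_mul (-I)).mexp_smul B
  refine ((hplus.mul_const A).mul hminus).congr_deriv ?_
  rw [(commute_mexp_smul B (I * φ t)).eq]
  simp only [matComm, mul_sub, sub_mul, smul_mul_assoc, mul_smul_comm, mul_assoc]
  module

theorem integral_smul_mexp_conj_matComm {φ φ' : ℝ → ℝ} (hφ : ∀ t, HasDerivAt φ (φ' t) t)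
    (hφ' : Continuous φ') (A B : Mat n) (a b : ℝ) :
    ∫ t in a..b, (φ' t : ℂ) • (mexp ((I * φ t) • B) * matComm A B * mexp ((-I * φ t) • B)) =
      I • (mexp ((I * φ b) • B) * A * mexp ((-I * φ b) • B) -
        mexp ((I * φ a) • B) * A * mexp ((-I * φ a) • B)) := by
  have hcont : Continuous fun t =>
      (-I * φ' t) • (mexp ((I * φ t) • B) * matComm A B * mexp ((-I * φ t) • B)) :=
    (continuous_const.mul (Complex.continuous_ofReal.comp hφ')).smul
      (continuous_mexp_conj (fun t => (hφ t).differentiableAt) _ B)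
  rw [← intervalIntegral.integral_eq_sub_of_hasDerivAt
    (fun t _ => hasDerivAt_mexp_conj (hφ t) A B) (hcont.intervalIntegrable a b),
    ← intervalIntegral.integral_smul]
  refine intervalIntegral.integral_congr fun t _ => ?_
  rw [smul_smul, ← mul_assoc, mul_neg, Complex.I_mul_I, neg_neg, one_mul]

end Exponential

section Trotter

variable {n : ℕ} {H1 H2 : Mat n} {f1 f2 : ℝ → ℝ}

theorem Es1_eq (hf2 : ContDiff ℝ 1 f2) (r : ℝ) :
    Es1 H1 H2 f1 f2 r =
      (I * f1 r) • (mexp ((I * ((r * f2 r : ℝ) : ℂ)) • H2) * H1 *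
          mexp ((-I * ((r * f2 r : ℝ) : ℂ)) • H2) - H1)
        - (I * ((r * deriv f1 r : ℝ) : ℂ)) • H1 - (I * ((r * deriv f2 r : ℝ) : ℂ)) • H2 := by
  set C : ℝ → Mat n := fun s => mexp ((I * ((s * f2 s : ℝ) : ℂ)) • H2) * matComm H1 H2 *
      mexp ((-I * ((s * f2 s : ℝ) : ℂ)) • H2)
  have hf2d := hf2.differentiable one_ne_zero
  have hφ' : Continuous fun s => f2 s + s * deriv f2 s :=
    hf2.continuous.add (continuous_id.mul (hf2.continuous_deriv le_rfl))
  have hC : Continuous C :=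
    continuous_mexp_conj (fun s => (hasDerivAt_id_mul hf2d s).differentiableAt) _ _
  have hcombine : (∫ s in (0:ℝ)..r, ((f1 r * f2 s : ℝ) : ℂ) • C s) +
      (∫ s in (0:ℝ)..r, ((s * f1 r * deriv f2 s : ℝ) : ℂ) • C s) =
      (f1 r : ℂ) • ∫ s in (0:ℝ)..r, ((f2 s + s * deriv f2 s : ℝ) : ℂ) • C s := by
    have hf2' := hf2.continuous_deriv le_rfl
    rw [← intervalIntegral.integral_add ((by fun_prop : Continuous _).intervalIntegrable _ _)
      ((by fun_prop : Continuous _).intervalIntegrable _ _), ← intervalIntegral.integral_smul]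
    refine intervalIntegral.integral_congr fun s _ => ?_
    simp only [smul_smul, ← add_smul]
    push_cast
    ring_nf
  have hFTC := integral_smul_mexp_conj_matComm (hasDerivAt_id_mul hf2d) hφ' H1 H2 0 r
  simp only [zero_mul, Complex.ofReal_zero, mul_zero, zero_smul, mexp_zero, mul_one, one_mul] at hFTC
  rw [Es1, show ∀ X a b Y : Mat n, X - a - b + Y = X + Y - a - b from fun _ _ _ _ => by abel,
    hcombine, hFTC, smul_smul, mul_comm (f1 r : ℂ)]

theorem continuous_Es1 (hf1 : ContDiff ℝ 1 f1) (hf2 : ContDiff ℝ 1 f2) :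
    Continuous (Es1 H1 H2 f1 f2) := by
  have hconj := continuous_mexp_conj
    (fun r => (hasDerivAt_id_mul (hf2.differentiable one_ne_zero) r).differentiableAt) H1 H2
  have hf1' := hf1.continuous_deriv le_rfl
  have hf2' := hf2.continuous_deriv le_rfl
  have hf1c := hf1.continuous
  rw [funext (Es1_eq (f1 := f1) hf2)]
  fun_prop

theorem hasDerivAt_Us1 (hf1 : ContDiff ℝ 1 f1) (hf2 : ContDiff ℝ 1 f2) (t : ℝ) :
    HasDerivAt (fun τ => Us1 H1 H2 f1 f2 τ 0)
      (-I • (Ham H1 H2 f1 f2 t * Us1 H1 H2 f1 f2 t 0) +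
        mexp ((-I * ((t * f2 t : ℝ) : ℂ)) • H2) * Es1 H1 H2 f1 f2 t *
          mexp ((-I * ((t * f1 t : ℝ) : ℂ)) • H1)) t := by
  have hE2 := ((hasDerivAt_id_mul (hf2.differentiable one_ne_zero) t).ofReal_comp.const_mul
    (-I)).mexp_smul H2
  have hE1 := ((hasDerivAt_id_mul (hf1.differentiable one_ne_zero) t).ofReal_comp.const_mul
    (-I)).mexp_smul H1
  simp only [Us1, sub_zero]
  refine (hE2.mul hE1).congr_deriv ?_
  rw [Es1_eq hf2]
  set E2 := mexp ((-I * ((t * f2 t : ℝ) : ℂ)) • H2)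
  set E1 := mexp ((-I * ((t * f1 t : ℝ) : ℂ)) • H1)
  have hinv (X : Mat n) : E2 * (mexp ((I * ((t * f2 t : ℝ) : ℂ)) • H2) * X) = X := by
    rw [← mul_assoc, ← neg_neg (I * _), ← neg_mul, mexp_smul_mul_mexp_neg_smul, one_mul]
  have hcomm (X : Mat n) : H2 * (E2 * X) = E2 * (H2 * X) := by
    rw [← mul_assoc, (commute_mexp_smul H2 _).eq, mul_assoc]
  simp only [Ham, mul_sub, sub_mul, add_mul, smul_mul_assoc, mul_smul_comm, smul_sub, smul_add,
    mul_assoc, hinv, hcomm]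
  push_cast
  module

end Trotter

theorem isHermitian_Ham {n : ℕ} {H1 H2 : Mat n} (hH1 : H1.IsHermitian) (hH2 : H2.IsHermitian)
    (f1 f2 : ℝ → ℝ) (t : ℝ) : (Ham H1 H2 f1 f2 t).IsHermitian :=
  (hH1.smul (Complex.conj_ofReal _)).add (hH2.smul (Complex.conj_ofReal _))

namespace IsEvolution

variable {n : ℕ} {H1 H2 : Mat n} {f1 f2 : ℝ → ℝ} {U : ℝ → ℝ → Mat n}
  (hHam : ∀ t, (Ham H1 H2 f1 f2 t).IsHermitian) (hU : IsEvolution H1 H2 f1 f2 U)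
include hHam hU

theorem hasDerivAt_conjTranspose (s t : ℝ) :
    HasDerivAt (fun τ => (U τ s)ᴴ) (I • ((U t s)ᴴ * Ham H1 H2 f1 f2 t)) t := by
  simpa [star_eq_conjTranspose, conjTranspose_smul, conjTranspose_mul, (hHam t).eq] using
    (hU.2 s t).star

theorem conjTranspose_mul_eq (a t s : ℝ) : (U t a)ᴴ * U t s = (U s a)ᴴ := by
  have hconst (τ : ℝ) : HasDerivAt (fun τ => (U τ a)ᴴ * U τ s) 0 τ := by
    refine ((hU.hasDerivAt_conjTranspose hHam a τ).mul (hU.2 s τ)).congr_deriv ?_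
    simp only [smul_mul_assoc, mul_smul_comm, mul_assoc]
    module
  simpa [hU.1 s] using is_const_of_deriv_eq_zero (fun τ => (hconst τ).differentiableAt)
    (fun τ => (hconst τ).deriv) t s

theorem mul_conjTranspose_self (t a : ℝ) : U t a * (U t a)ᴴ = 1 := by
  have h := hU.conjTranspose_mul_eq hHam a t a
  rw [hU.1 a, conjTranspose_one] at h
  exact mul_eq_one_comm.mp h

theorem eq_mul_conjTranspose (t s a : ℝ) : U t s = U t a * (U s a)ᴴ := by
  rw [← hU.conjTranspose_mul_eq hHam a t s, ← mul_assoc, hU.mul_conjTranspose_self hHam, one_mul]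

theorem sub_mul_eq_integral {V R : ℝ → Mat n}
    (hV : ∀ t, HasDerivAt V (-I • (Ham H1 H2 f1 f2 t * V t) + R t) t) (hR : Continuous R)
    (a b : ℝ) : V b - U b a * V a = ∫ s in a..b, U b s * R s := by
  have hK := hU.hasDerivAt_conjTranspose hHam a
  have hderiv (t : ℝ) : HasDerivAt (fun t => (U t a)ᴴ * V t) ((U t a)ᴴ * R t) t := by
    refine ((hK t).mul (hV t)).congr_deriv ?_
    simp only [mul_add, smul_mul_assoc, mul_smul_comm, mul_assoc]
    module
  have hint : IntervalIntegrable (fun s => (U s a)ᴴ * R s) MeasureTheory.volume a b :=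
    ((continuous_iff_continuousAt.2 fun t => (hK t).continuousAt).mul hR).intervalIntegrable a b
  calc V b - U b a * V a = U b a * ((U b a)ᴴ * V b - (U a a)ᴴ * V a) := by
        rw [mul_sub, ← mul_assoc, hU.mul_conjTranspose_self hHam, hU.1, conjTranspose_one,
          one_mul, one_mul]
    _ = U b a * ∫ s in a..b, (U s a)ᴴ * R s := by
        rw [intervalIntegral.integral_eq_sub_of_hasDerivAt (fun t _ => hderiv t) hint]
    _ = ∫ s in a..b, U b a * ((U s a)ᴴ * R s) :=
        ((ContinuousLinearMap.mul ℂ (Mat n) (U b a)).intervalIntegral_comp_comm hint).symm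
    _ = ∫ s in a..b, U b s * R s := intervalIntegral.integral_congr fun s _ => by
        rw [hU.eq_mul_conjTranspose hHam b s a, mul_assoc]

end IsEvolution

theorem error_representation_first_order_standard_Trotter_general
    {n : ℕ} (H1 H2 : Mat n)
    (hH1 : H1.IsHermitian) (hH2 : H2.IsHermitian)
    (f1 f2 : ℝ → ℝ) (hf1 : ContDiff ℝ 1 f1) (hf2 : ContDiff ℝ 1 f2)
    (U : ℝ → ℝ → Mat n) (hU : IsEvolution H1 H2 f1 f2 U)
    (h : ℝ) :
    Us1 H1 H2 f1 f2 h 0 - U h 0 =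
      ∫ s in (0:ℝ)..h,
        U h s * mexp ((-Complex.I * ((s * f2 s : ℝ) : ℂ)) • H2) * Es1 H1 H2 f1 f2 s *
          mexp ((-Complex.I * ((s * f1 s : ℝ) : ℂ)) • H1) := by
  have hE (f : ℝ → ℝ) (hf : ContDiff ℝ 1 f) (H : Mat n) :
      Continuous fun s => mexp ((-I * ((s * f s : ℝ) : ℂ)) • H) :=
    continuous_mexp_smul (fun s => ((hasDerivAt_id_mul (hf.differentiable one_ne_zero) s
      ).ofReal_comp.const_mul (-I)).differentiableAt) H
  have hDuhamel := hU.sub_mul_eq_integral (isHermitian_Ham hH1 hH2 f1 f2) (hasDerivAt_Us1 hf1 hf2)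
    (((hE f2 hf2 H2).mul (continuous_Es1 hf1 hf2)).mul (hE f1 hf1 H1)) 0 h
  have hUs1_zero : Us1 H1 H2 f1 f2 0 0 = 1 := by simp [Us1, mexp_zero]
  rw [hUs1_zero, mul_one] at hDuhamel
  rw [hDuhamel]
  simp only [mul_assoc]

/-- **Error representation of the first-order standard Trotter formula.** -/
theorem error_representation_first_order_standard_Trotter
    {n : ℕ} (hn : 0 < n) (H1 H2 : Mat n)
    (hH1 : H1.IsHermitian) (hH2 : H2.IsHermitian)
    (f1 f2 : ℝ → ℝ) (hf1 : ContDiff ℝ 1 f1) (hf2 : ContDiff ℝ 1 f2)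
    (U : ℝ → ℝ → Mat n) (hU : IsEvolution H1 H2 f1 f2 U)
    (h : ℝ) (hh : 0 ≤ h) :
    Us1 H1 H2 f1 f2 h 0 - U h 0 =
      ∫ s in (0:ℝ)..h,
        U h s * mexp ((-Complex.I * ((s * f2 s : ℝ) : ℂ)) • H2) * Es1 H1 H2 f1 f2 s *
          mexp ((-Complex.I * ((s * f1 s : ℝ) : ℂ)) • H1) :=
  error_representation_first_order_standard_Trotter_general H1 H2 hH1 hH2 f1 f2 hf1 hf2 U hU h
end
end

section
/- Error representation of the first-order generalized Trotter formula: for every h ≥ 0 one has U_{g,1}(h,0) - U(h,0) = ∫₀^h U(h,s) · exp(-i (∫₀^s f2(s')ds') H2) · E_{g,1}(s) · exp(-i (∫₀^s f1(s')ds') H1) ds, where for r ≥ 0, E_{g,1}(r) = ∫₀^r f1(r) f2(s) · exp(i (∫₀^s f2(s')ds') H2) [H1,H2] exp(-i (∫₀^s f2(s')ds') H2) ds. -/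
open scoped Matrix.Norms.L2Operator
open MeasureTheory

noncomputable section

/-- The integrand appearing in the error representation of the first-order generalized Trotter
formula. -/
noncomputable def Eg1 {n : ℕ} (H1 H2 : Mat n) (f1 f2 : ℝ → ℝ) (r : ℝ) : Mat n :=
  ∫ s in (0:ℝ)..r, ((f1 r * f2 s : ℝ) : ℂ) •
    (mexp ((Complex.I * ((∫ s' in (0:ℝ)..s, f2 s' : ℝ) : ℂ)) • H2) * matComm H1 H2 *
      mexp ((-Complex.I * ((∫ s' in (0:ℝ)..s, f2 s' : ℝ) : ℂ)) • H2))

/-!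
Both sides are compared through Duhamel's principle: the Trotter step `V(t) = U_{g,1}(t,0)`
solves the Schrödinger equation up to a source term, `V' = -i H V + R`, and any such `V`
satisfies `V(h) - U(h,0) V(0) = ∫₀^h U(h,s) R(s) ds`. Differentiating
`V = exp(-i F₂ H₂) exp(-i F₁ H₁)` (with `Fⱼ = ∫₀ fⱼ`) gives
`R = -i f₁ exp(-i F₂ H₂) (H₁ - exp(i F₂ H₂) H₁ exp(-i F₂ H₂)) exp(-i F₁ H₁)`, and by the
fundamental theorem of calculus the bracket is the integral of the conjugated commutator
`[H₁, H₂]` that defines `E_{g,1}`. Duhamel's principle itself rests on the propagation law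
`U(t,s) U(s,r) = U(t,r)`, a consequence of uniqueness for linear ODEs (Grönwall).
-/

open Set

section LinearODE

variable {A : Type*} [NormedRing A] [NormedSpace ℝ A] {G D : ℝ → A}

theorem eq_zero_of_hasDerivAt_mul_of_mem_Icc (hG : Continuous G)
    (hD : ∀ t, HasDerivAt D (G t * D t) t) {a b : ℝ} (ha : D a = 0) :
    ∀ t ∈ Icc a b, D t = 0 := by
  obtain ⟨K, hK⟩ := isCompact_Icc.exists_bound_of_continuousOn (hG.continuousOn (s := Icc a b))
  refine eq_zero_of_abs_deriv_le_mul_abs_self_of_eq_zero_right (K := K)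
    (fun t _ => (hD t).continuousAt.continuousWithinAt) (fun t _ => (hD t).hasDerivWithinAt)
    ha fun t ht => ?_
  calc ‖G t * D t‖ ≤ ‖G t‖ * ‖D t‖ := norm_mul_le _ _
    _ ≤ K * ‖D t‖ := by gcongr; exact hK t (Ico_subset_Icc_self ht)

theorem eq_zero_of_hasDerivAt_mul (hG : Continuous G) (hD : ∀ t, HasDerivAt D (G t * D t) t)
    {a : ℝ} (ha : D a = 0) (t : ℝ) : D t = 0 := by
  rcases le_total a t with hat | hta
  · exact eq_zero_of_hasDerivAt_mul_of_mem_Icc hG hD ha t ⟨hat, le_rfl⟩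
  · have hD_neg : ∀ τ, HasDerivAt (fun τ => D (-τ)) (-G (-τ) * D (-τ)) τ := fun τ =>
      ((hD (-τ)).scomp τ (hasDerivAt_neg τ)).congr_deriv (by rw [neg_one_smul, neg_mul])
    simpa using eq_zero_of_hasDerivAt_mul_of_mem_Icc (hG.comp continuous_neg).neg hD_neg
      (by simpa using ha) (-t) ⟨neg_le_neg hta, le_rfl⟩

end LinearODE

def IsPropagator {A : Type*} [NormedRing A] [NormedSpace ℝ A] (G : ℝ → A) (U : ℝ → ℝ → A) :
    Prop :=
  (∀ s, U s s = 1) ∧ ∀ s t, HasDerivAt (fun τ => U τ s) (G t * U t s) t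

namespace IsPropagator

variable {A : Type*} [NormedRing A] [NormedAlgebra ℝ A] {G : ℝ → A} {U : ℝ → ℝ → A}

theorem mul_eq (hU : IsPropagator G U) (hG : Continuous G) (t s r : ℝ) :
    U t s * U s r = U t r := by
  have hD : ∀ τ, HasDerivAt (fun τ => U τ s * U s r - U τ r) (G τ * (U τ s * U s r - U τ r)) τ :=
    fun τ => (((hU.2 s τ).mul_const (U s r)).sub (hU.2 r τ)).congr_deriv
      (by rw [mul_sub, mul_assoc])
  exact sub_eq_zero.mp (eq_zero_of_hasDerivAt_mul hG hD (a := s) (by simp [hU.1 s]) t)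

theorem hasDerivAt_right [HasSummableGeomSeries A] (hU : IsPropagator G U) (hG : Continuous G)
    (t s : ℝ) : HasDerivAt (fun σ => U t σ) (-(U t s * G s)) s := by
  have hinv : (fun σ => U s σ) = fun σ => Ring.inverse (U σ s) := funext fun σ =>
    (Ring.inverse_unit ⟨U σ s, U s σ, by rw [hU.mul_eq hG, hU.1], by rw [hU.mul_eq hG, hU.1]⟩).symm
  have hback : HasDerivAt (fun σ => U s σ) (-G s) s := by
    rw [hinv]
    exact ((hasFDerivAt_ringInverse (𝕜 := ℝ) (1 : Aˣ)).comp_hasDerivAt_of_eq s (hU.2 s s)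
      (by rw [hU.1, Units.val_one])).congr_deriv (by simp [hU.1 s])
  rw [show (fun σ => U t σ) = fun σ => U t s * U s σ from
    funext fun σ => (hU.mul_eq hG t s σ).symm]
  exact (hback.const_mul (U t s)).congr_deriv (mul_neg _ _)

theorem sub_mul_eq_integral [CompleteSpace A] (hU : IsPropagator G U) (hG : Continuous G)
    {V R : ℝ → A} (hV : ∀ s, HasDerivAt V (G s * V s + R s) s) (hR : Continuous R) (a b : ℝ) :
    V b - U b a * V a = ∫ s in a..b, U b s * R s := by
  have hΦ : ∀ s, HasDerivAt (fun s => U b s * V s) (U b s * R s) s := fun s =>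
    ((hU.hasDerivAt_right hG b s).mul (hV s)).congr_deriv (by noncomm_ring)
  have hUb : Continuous (U b) :=
    continuous_iff_continuousAt.mpr fun s => (hU.hasDerivAt_right hG b s).continuousAt
  rw [intervalIntegral.integral_eq_sub_of_hasDerivAt (fun s _ => hΦ s)
    ((hUb.mul hR).intervalIntegrable a b), hU.1, one_mul]

end IsPropagator

variable {n : ℕ}

theorem continuous_Ham (H1 H2 : Mat n) {f1 f2 : ℝ → ℝ} (hf1 : Continuous f1)
    (hf2 : Continuous f2) : Continuous (Ham H1 H2 f1 f2) := by
  unfold Ham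
  fun_prop

theorem IsEvolution.isPropagator {H1 H2 : Mat n} {f1 f2 : ℝ → ℝ} {U : ℝ → ℝ → Mat n}
    (hU : IsEvolution H1 H2 f1 f2 U) :
    IsPropagator (fun t => (-Complex.I) • Ham H1 H2 f1 f2 t) U :=
  ⟨hU.1, fun s t => (hU.2 s t).congr_deriv (smul_mul_assoc _ _ _).symm⟩

def mexpIntegral (M : Mat n) (c : ℂ) (f : ℝ → ℝ) (s : ℝ) : Mat n :=
  mexp ((c * ((∫ r in (0:ℝ)..s, f r : ℝ) : ℂ)) • M)

section mexpIntegral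

variable (M : Mat n) (c : ℂ) {f : ℝ → ℝ}

theorem hasDerivAt_mexpIntegral (hf : Continuous f) (s : ℝ) :
    HasDerivAt (mexpIntegral M c f) ((c * f s) • (M * mexpIntegral M c f s)) s := by
  have hF : HasDerivAt (fun s => c * ((∫ r in (0:ℝ)..s, f r : ℝ) : ℂ)) (c * f s) s :=
    ((intervalIntegral.integral_hasDerivAt_right (hf.intervalIntegrable _ _)
      (hf.stronglyMeasurableAtFilter _ _) hf.continuousAt).ofReal_comp).const_mul c
  exact (hasDerivAt_exp_smul_const' M _).scomp s hF

theorem continuous_mexpIntegral (hf : Continuous f) : Continuous (mexpIntegral M c f) :=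
  continuous_iff_continuousAt.mpr fun s => (hasDerivAt_mexpIntegral M c hf s).continuousAt

variable (f) (s : ℝ)

theorem mexpIntegral_zero : mexpIntegral M c f 0 = 1 := by
  simp [mexpIntegral, mexp]

theorem mexpIntegral_neg_mul : mexpIntegral M (-c) f s * mexpIntegral M c f s = 1 := by
  rw [mexpIntegral, mexpIntegral, mexp, mexp, ← Matrix.exp_add_of_commute _ _
    (((Commute.refl M).smul_left _).smul_right _), ← add_smul, neg_mul, neg_add_cancel,
    zero_smul, NormedSpace.exp_zero]

theorem commute_mexpIntegral : Commute M (mexpIntegral M c f s) :=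
  ((Commute.refl M).smul_right _).exp_right

end mexpIntegral

theorem hasDerivAt_mexpIntegral_conj (M X : Mat n) (c : ℂ) {f : ℝ → ℝ} (hf : Continuous f)
    (r : ℝ) :
    HasDerivAt (fun r => mexpIntegral M c f r * X * mexpIntegral M (-c) f r)
      ((-(c * f r)) • (mexpIntegral M c f r * matComm X M * mexpIntegral M (-c) f r)) r := by
  refine (((hasDerivAt_mexpIntegral M c hf r).mul_const X).mul
    (hasDerivAt_mexpIntegral M (-c) hf r)).congr_deriv ?_
  rw [(commute_mexpIntegral M c f r).eq]
  simp only [matComm, smul_mul_assoc, mul_smul_comm, mul_sub, sub_mul, mul_assoc]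
  module

variable (H1 H2 : Mat n)

theorem Ug1_self (f1 f2 : ℝ → ℝ) (a : ℝ) : Ug1 H1 H2 f1 f2 a a = 1 := by
  simp [Ug1, mexp]

variable {f1 f2 : ℝ → ℝ}

theorem Eg1_eq (hf2 : Continuous f2) (s : ℝ) :
    Eg1 H1 H2 f1 f2 s = (-Complex.I * f1 s) •
      (H1 - mexpIntegral H2 Complex.I f2 s * H1 * mexpIntegral H2 (-Complex.I) f2 s) := by
  set P := mexpIntegral H2 Complex.I f2
  set A := mexpIntegral H2 (-Complex.I) f2
  have hcont : Continuous fun r => (-(Complex.I * f2 r)) • (P r * matComm H1 H2 * A r) := by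
    have := continuous_mexpIntegral H2 Complex.I hf2
    have := continuous_mexpIntegral H2 (-Complex.I) hf2
    fun_prop
  have hFTC := intervalIntegral.integral_eq_sub_of_hasDerivAt
    (fun r _ => hasDerivAt_mexpIntegral_conj H2 H1 Complex.I hf2 r) (hcont.intervalIntegrable 0 s)
  calc Eg1 H1 H2 f1 f2 s
      = ∫ r in (0:ℝ)..s, ((f1 s : ℂ) * Complex.I) •
          ((-(Complex.I * f2 r)) • (P r * matComm H1 H2 * A r)) := by
        refine intervalIntegral.integral_congr fun r _ => ?_
        rw [smul_smul]
        congr 1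
        push_cast
        linear_combination ((f1 s : ℂ) * f2 r) * Complex.I_sq
    _ = ((f1 s : ℂ) * Complex.I) • (P s * H1 * A s - P 0 * H1 * A 0) := by
        rw [intervalIntegral.integral_smul, hFTC]
    _ = _ := by
        simp only [P, A, mexpIntegral_zero, one_mul, mul_one]
        module

theorem hasDerivAt_Ug1 (hf1 : Continuous f1) (hf2 : Continuous f2) (s : ℝ) :
    HasDerivAt (fun t => Ug1 H1 H2 f1 f2 t 0)
      ((-Complex.I) • Ham H1 H2 f1 f2 s * Ug1 H1 H2 f1 f2 s 0 +
        mexpIntegral H2 (-Complex.I) f2 s * Eg1 H1 H2 f1 f2 s *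
          mexpIntegral H1 (-Complex.I) f1 s) s := by
  refine ((hasDerivAt_mexpIntegral H2 (-Complex.I) hf2 s).mul
    (hasDerivAt_mexpIntegral H1 (-Complex.I) hf1 s)).congr_deriv ?_
  have hcancel : ∀ X,
      mexpIntegral H2 (-Complex.I) f2 s * (mexpIntegral H2 Complex.I f2 s * X) = X := fun X => by
    rw [← mul_assoc, mexpIntegral_neg_mul, one_mul]
  have hUg1 : Ug1 H1 H2 f1 f2 s 0 =
      mexpIntegral H2 (-Complex.I) f2 s * mexpIntegral H1 (-Complex.I) f1 s := rfl
  rw [Eg1_eq H1 H2 hf2, hUg1]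
  simp only [Ham, smul_mul_assoc, mul_smul_comm, add_mul, mul_sub, sub_mul, smul_add, smul_sub,
    mul_assoc]
  rw [hcancel]
  module

theorem continuous_Eg1 (hf1 : Continuous f1) (hf2 : Continuous f2) :
    Continuous (Eg1 H1 H2 f1 f2) := by
  rw [funext (Eg1_eq H1 H2 hf2)]
  have := continuous_mexpIntegral H2 Complex.I hf2
  have := continuous_mexpIntegral H2 (-Complex.I) hf2
  fun_prop

theorem error_representation_first_order_generalized_Trotter_general
    {n : ℕ} (H1 H2 : Mat n)
    (f1 f2 : ℝ → ℝ) (hf1 : ContDiff ℝ 1 f1) (hf2 : ContDiff ℝ 1 f2)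
    (U : ℝ → ℝ → Mat n) (hU : IsEvolution H1 H2 f1 f2 U)
    (h : ℝ) :
    Ug1 H1 H2 f1 f2 h 0 - U h 0 =
      ∫ s in (0:ℝ)..h,
        U h s * mexp ((-Complex.I * ((∫ s' in (0:ℝ)..s, f2 s' : ℝ) : ℂ)) • H2) *
          Eg1 H1 H2 f1 f2 s *
          mexp ((-Complex.I * ((∫ s' in (0:ℝ)..s, f1 s' : ℝ) : ℂ)) • H1) := by
  have hc1 := hf1.continuous
  have hc2 := hf2.continuous
  have hR : Continuous fun s => mexpIntegral H2 (-Complex.I) f2 s * Eg1 H1 H2 f1 f2 s *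
      mexpIntegral H1 (-Complex.I) f1 s :=
    ((continuous_mexpIntegral H2 _ hc2).mul (continuous_Eg1 H1 H2 hc1 hc2)).mul
      (continuous_mexpIntegral H1 _ hc1)
  have hDuhamel := hU.isPropagator.sub_mul_eq_integral
    ((continuous_Ham H1 H2 hc1 hc2).fun_const_smul _) (hasDerivAt_Ug1 H1 H2 hc1 hc2) hR 0 h
  rw [Ug1_self, mul_one] at hDuhamel
  simp only [mul_assoc] at hDuhamel ⊢
  exact hDuhamel

/-- **Error representation of the first-order generalized Trotter formula.** -/
theorem error_representation_first_order_generalized_Trotter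
    {n : ℕ} (hn : 0 < n) (H1 H2 : Mat n)
    (hH1 : H1.IsHermitian) (hH2 : H2.IsHermitian)
    (f1 f2 : ℝ → ℝ) (hf1 : ContDiff ℝ 1 f1) (hf2 : ContDiff ℝ 1 f2)
    (U : ℝ → ℝ → Mat n) (hU : IsEvolution H1 H2 f1 f2 U)
    (h : ℝ) (hh : 0 ≤ h) :
    Ug1 H1 H2 f1 f2 h 0 - U h 0 =
      ∫ s in (0:ℝ)..h,
        U h s * mexp ((-Complex.I * ((∫ s' in (0:ℝ)..s, f2 s' : ℝ) : ℂ)) • H2) *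
          Eg1 H1 H2 f1 f2 s *
          mexp ((-Complex.I * ((∫ s' in (0:ℝ)..s, f1 s' : ℝ) : ℂ)) • H1) :=
  error_representation_first_order_generalized_Trotter_general H1 H2 f1 f2 hf1 hf2 U hU h
end
end

section
/- Operator norm error of one first-order generalized Trotter step: suppose F1, F2 ≥ 0 satisfy |f1(t)| ≤ F1 and |f2(t)| ≤ F2 for all t ∈ [0,h]. Then ‖U_{g,1}(h,0) - U(h,0)‖ ≤ (1/2) F1 F2 ‖[H1,H2]‖ h². -/
open scoped Matrix.Norms.L2Operator
open MeasureTheory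

noncomputable section

/-!
Write `g_k(t) = ∫₀ᵗ f_k` and `E_k(t) = exp(-i g_k(t) H_k)`. The Trotter product
`V(t) = E₂(t) E₁(t) = U_{g,1}(t,0)` solves the perturbed Schrödinger equation
`V' = -i H(t) V + R(t)` with `R(t) = i f₁(t) [H₁, E₂(t)] E₁(t)`. The exact evolution
`W = U(·,0)` is unitary and `(W⋆V)' = W⋆R`, so `‖V(h) - W(h)‖ ≤ ∫₀ʰ ‖R‖` (Duhamel).
Differentiating `τ ↦ exp(-iτB) X exp(-i(c-τ)B)` gives `‖[X, exp(-icB)]‖ ≤ |c| ‖[X, B]‖`,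
hence `‖R(s)‖ ≤ F₁ F₂ ‖[H₁, H₂]‖ s`, which integrates to `F₁ F₂ ‖[H₁, H₂]‖ h² / 2`.
-/

open NormedSpace
open Complex (I)

section BanachAlgebra

variable {A : Type*} [NormedRing A] [NormedAlgebra ℂ A] [CompleteSpace A]

theorem hasDerivAt_exp_neg_I_mul_smul {g : ℝ → ℝ} {g' t : ℝ} (B : A) (hg : HasDerivAt g g' t) :
    HasDerivAt (fun s => exp ((-I * g s) • B)) ((-I * g') • (B * exp ((-I * g t) • B))) t :=
  (hasDerivAt_exp_smul_const' B _).scomp t (hg.ofReal_comp.const_mul (-I))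

end BanachAlgebra

section CStarAlgebra

variable {A : Type*} [NormedRing A] [NormedAlgebra ℂ A] [CompleteSpace A] [StarRing A]
  [CStarRing A] [StarModule ℂ A]

theorem exp_neg_I_mul_smul_mem_unitary {B : A} (hB : IsSelfAdjoint B) (c : ℝ) :
    exp ((-I * c) • B) ∈ unitary A := by
  let +nondep : NormedAlgebra ℚ A := .restrictScalars ℚ ℂ A
  exact exp_mem_unitary_of_mem_skewAdjoint <| hB.smul_mem_skewAdjoint <| by
    simp [skewAdjoint.mem_iff, Complex.conj_ofReal]

theorem norm_mul_exp_sub_exp_mul_le {B : A} (hB : IsSelfAdjoint B) (X : A) (c : ℝ) :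
    ‖X * exp ((-I * c) • B) - exp ((-I * c) • B) * X‖ ≤ |c| * ‖X * B - B * X‖ := by
  set E : ℝ → A := fun τ => exp ((-I * τ) • B)
  have hE : ∀ τ, HasDerivAt E ((-I) • (B * E τ)) τ := fun τ => by
    simpa only [id, Complex.ofReal_one, mul_one] using
      hasDerivAt_exp_neg_I_mul_smul B (hasDerivAt_id τ)
  have hE_rev : ∀ τ, HasDerivAt (fun τ => E (c - τ)) (I • (B * E (c - τ))) τ := fun τ => by
    simpa only [id, Complex.ofReal_neg, Complex.ofReal_one, mul_neg, mul_one, neg_neg] using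
      hasDerivAt_exp_neg_I_mul_smul B ((hasDerivAt_id τ).const_sub c)
  have hcomm : ∀ τ, B * E τ = E τ * B := fun τ =>
    (((Commute.refl B).smul_right _).exp_right).eq
  set Ψ' : ℝ → A := fun τ => E τ * ((-I) • (B * X - X * B)) * E (c - τ)
  have hΨ : ∀ τ, HasDerivAt (fun τ => E τ * X * E (c - τ)) (Ψ' τ) τ := fun τ => by
    refine (((hE τ).mul_const X).mul (hE_rev τ)).congr_deriv ?_
    rw [hcomm τ]
    simp only [Ψ', smul_mul_assoc, mul_smul_comm, mul_sub, sub_mul, mul_assoc]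
    module
  have hΨ'_cont : Continuous Ψ' := by
    have hE_cont : Continuous E := continuous_iff_continuousAt.2 fun τ => (hE τ).continuousAt
    exact (hE_cont.mul continuous_const).mul (hE_cont.comp (continuous_sub_left c))
  have hΨ'_norm : ∀ τ, ‖Ψ' τ‖ = ‖X * B - B * X‖ := fun τ => by
    rw [CStarRing.norm_mul_mem_unitary _ (exp_neg_I_mul_smul_mem_unitary hB _),
      CStarRing.norm_mem_unitary_mul _ (exp_neg_I_mul_smul_mem_unitary hB _), norm_smul, norm_neg,
      Complex.norm_I, one_mul, ← norm_neg]
    congr 1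
    abel
  have hFTC := intervalIntegral.integral_eq_sub_of_hasDerivAt (fun τ _ => hΨ τ)
    (hΨ'_cont.intervalIntegrable 0 c)
  have hbound := intervalIntegral.norm_integral_le_of_norm_le_const
    (fun τ (_ : τ ∈ Set.uIoc 0 c) => (hΨ'_norm τ).le)
  simp only [hFTC, E, Complex.ofReal_zero, mul_zero, zero_smul, NormedSpace.exp_zero,
    one_mul, mul_one, sub_zero, sub_self] at hbound
  rw [← norm_neg, neg_sub, mul_comm |c|]
  exact hbound

end CStarAlgebra

section Schrodinger

variable {A : Type*} [NormedRing A] [NormedAlgebra ℂ A] [StarRing A] [StarModule ℂ A]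
  {H W V R : ℝ → A}

theorem hasDerivAt_star_mul_of_schrodinger [ContinuousStar A] {t : ℝ} (hH : IsSelfAdjoint (H t))
    (hW : HasDerivAt W ((-I) • (H t * W t)) t)
    (hV : HasDerivAt V ((-I) • (H t * V t) + R t) t) :
    HasDerivAt (fun s => star (W s) * V s) (star (W t) * R t) t := by
  refine (hW.star.mul hV).congr_deriv ?_
  rw [star_smul, star_mul, hH.star_eq]
  simp only [star_neg, Complex.star_def, Complex.conj_I, mul_add, smul_mul_assoc, mul_smul_comm,
    mul_assoc]
  module

variable [CStarRing A] [IsDedekindFiniteMonoid A]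

theorem mem_unitary_of_schrodinger (hH : ∀ t, IsSelfAdjoint (H t))
    (hW : ∀ t, HasDerivAt W ((-I) • (H t * W t)) t) (hW0 : W 0 = 1) (t : ℝ) :
    W t ∈ unitary A := by
  have hderiv : ∀ s, HasDerivAt (fun s => star (W s) * W s) 0 s := fun s => by
    simpa using hasDerivAt_star_mul_of_schrodinger (R := 0) (hH s) (hW s) (by simpa using hW s)
  have hconst : star (W t) * W t = star (W 0) * W 0 :=
    is_const_of_deriv_eq_zero (fun s => (hderiv s).differentiableAt) (fun s => (hderiv s).deriv) t 0
  rw [hW0, star_one, one_mul] at hconst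
  exact Unitary.mem_iff.2 ⟨hconst, mul_eq_one_symm hconst⟩

theorem norm_sub_le_integral_of_schrodinger [CompleteSpace A] {ρ : ℝ → ℝ} {h : ℝ}
    (hH : ∀ t, IsSelfAdjoint (H t)) (hW : ∀ t, HasDerivAt W ((-I) • (H t * W t)) t)
    (hV : ∀ t, HasDerivAt V ((-I) • (H t * V t) + R t) t) (hW0 : W 0 = 1) (hV0 : V 0 = 1)
    (hh : 0 ≤ h) (hR : ∀ s ∈ Set.Ioc 0 h, ‖R s‖ ≤ ρ s) (hρ : IntervalIntegrable ρ volume 0 h) :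
    ‖V h - W h‖ ≤ ∫ s in 0..h, ρ s := by
  set G : ℝ → A := fun s => star (W s) * V s
  have hG : ∀ s, HasDerivAt G (star (W s) * R s) s := fun s =>
    hasDerivAt_star_mul_of_schrodinger (hH s) (hW s) (hV s)
  have hU := mem_unitary_of_schrodinger hH hW hW0
  have hG'_norm : ∀ s, ‖star (W s) * R s‖ = ‖R s‖ := fun s =>
    CStarRing.norm_mem_unitary_mul _ (Unitary.star_mem (hU s))
  have hG'_bound : ∀ᵐ s ∂volume, s ∈ Set.Ioc 0 h → ‖star (W s) * R s‖ ≤ ρ s :=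
    ae_of_all _ fun s hs => (hG'_norm s).trans_le (hR s hs)
  have hG'_int : IntervalIntegrable (fun s => star (W s) * R s) volume 0 h := by
    refine hρ.mono_fun' ?_ ?_
    · rw [show (fun s => star (W s) * R s) = deriv G from funext fun s => (hG s).deriv.symm]
      exact aestronglyMeasurable_deriv G _
    · rw [Set.uIoc_of_le hh]
      exact (ae_restrict_iff' measurableSet_Ioc).2 hG'_bound
  have hFTC := intervalIntegral.integral_eq_sub_of_hasDerivAt (fun s _ => hG s) hG'_int
  have hG0 : G 0 = 1 := by simp [G, hW0, hV0]
  have hdiff : V h - W h = W h * (G h - G 0) := by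
    rw [hG0, mul_sub, mul_one, ← mul_assoc, Unitary.mul_star_self_of_mem (hU h), one_mul]
  calc ‖V h - W h‖ = ‖∫ s in 0..h, star (W s) * R s‖ := by
        rw [hdiff, CStarRing.norm_mem_unitary_mul _ (hU h), hFTC]
    _ ≤ ∫ s in 0..h, ρ s := intervalIntegral.norm_integral_le_of_norm_le hh hG'_bound hρ

end Schrodinger

section Trotter

variable {n : ℕ} {H1 H2 : Mat n} {f1 f2 : ℝ → ℝ}

theorem isSelfAdjoint_ham (hH1 : H1.IsHermitian) (hH2 : H2.IsHermitian) (t : ℝ) :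
    IsSelfAdjoint (Ham H1 H2 f1 f2 t) :=
  (IsSelfAdjoint.smul (Complex.conj_ofReal _) hH1.isSelfAdjoint).add
    (IsSelfAdjoint.smul (Complex.conj_ofReal _) hH2.isSelfAdjoint)

theorem ug1_self (H1 H2 : Mat n) (f1 f2 : ℝ → ℝ) (a : ℝ) : Ug1 H1 H2 f1 f2 a a = 1 := by
  simp [Ug1, mexp]

def ug1Defect (H1 H2 : Mat n) (f1 f2 : ℝ → ℝ) (t : ℝ) : Mat n :=
  (I * f1 t) • ((H1 * mexp ((-I * ((∫ s in 0..t, f2 s : ℝ) : ℂ)) • H2)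
      - mexp ((-I * ((∫ s in 0..t, f2 s : ℝ) : ℂ)) • H2) * H1)
    * mexp ((-I * ((∫ s in 0..t, f1 s : ℝ) : ℂ)) • H1))

theorem hasDerivAt_ug1 (hf1 : Continuous f1) (hf2 : Continuous f2) (t : ℝ) :
    HasDerivAt (fun t => Ug1 H1 H2 f1 f2 t 0)
      ((-I) • (Ham H1 H2 f1 f2 t * Ug1 H1 H2 f1 f2 t 0) + ug1Defect H1 H2 f1 f2 t) t := by
  have hE1 := hasDerivAt_exp_neg_I_mul_smul H1 ((hf1.integral_hasStrictDerivAt 0 t).hasDerivAt)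
  have hE2 := hasDerivAt_exp_neg_I_mul_smul H2 ((hf2.integral_hasStrictDerivAt 0 t).hasDerivAt)
  refine (hE2.mul hE1).congr_deriv ?_
  simp only [Ug1, ug1Defect, Ham, mexp]
  simp only [add_mul, sub_mul, smul_mul_assoc, mul_smul_comm, smul_add, smul_sub,
    smul_smul, mul_assoc]
  module

theorem norm_ug1Defect_le (hH1 : H1.IsHermitian) (hH2 : H2.IsHermitian) (t : ℝ) :
    ‖ug1Defect H1 H2 f1 f2 t‖ ≤ |f1 t| * (|∫ s in 0..t, f2 s| * ‖matComm H1 H2‖) := by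
  rw [ug1Defect, mexp, mexp, norm_smul, CStarRing.norm_mul_mem_unitary _
    (exp_neg_I_mul_smul_mem_unitary hH1.isSelfAdjoint _), norm_mul, Complex.norm_I, one_mul,
    Complex.norm_real, Real.norm_eq_abs]
  gcongr
  exact norm_mul_exp_sub_exp_mul_le hH2.isSelfAdjoint H1 _

theorem norm_ug1Defect_le_mul {F1 F2 s : ℝ} (hH1 : H1.IsHermitian) (hH2 : H2.IsHermitian)
    (hs : 0 ≤ s) (hf1 : |f1 s| ≤ F1) (hf2 : ∀ t ∈ Set.Ioc 0 s, |f2 t| ≤ F2) :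
    ‖ug1Defect H1 H2 f1 f2 s‖ ≤ F1 * F2 * ‖matComm H1 H2‖ * s := by
  have hg2 : |∫ t in 0..s, f2 t| ≤ F2 * s := by
    have := intervalIntegral.norm_integral_le_of_norm_le_const (f := f2) (C := F2)
      fun t ht => hf2 t (Set.uIoc_of_le hs ▸ ht)
    rwa [sub_zero, abs_of_nonneg hs, Real.norm_eq_abs] at this
  have hF1 : 0 ≤ F1 := (abs_nonneg _).trans hf1
  calc ‖ug1Defect H1 H2 f1 f2 s‖ ≤ |f1 s| * (|∫ t in 0..s, f2 t| * ‖matComm H1 H2‖) :=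
        norm_ug1Defect_le hH1 hH2 s
    _ ≤ F1 * (F2 * s * ‖matComm H1 H2‖) := by gcongr
    _ = F1 * F2 * ‖matComm H1 H2‖ * s := by ring

end Trotter

theorem opnorm_error_first_order_generalized_Trotter_step_general
    {n : ℕ} (H1 H2 : Mat n)
    (hH1 : H1.IsHermitian) (hH2 : H2.IsHermitian)
    (f1 f2 : ℝ → ℝ) (hf1 : ContDiff ℝ 1 f1) (hf2 : ContDiff ℝ 1 f2)
    (U : ℝ → ℝ → Mat n) (hU : IsEvolution H1 H2 f1 f2 U)
    (h : ℝ) (hh : 0 < h)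
    (F1 F2 : ℝ)
    (hb1 : ∀ t ∈ Set.Icc (0:ℝ) h, |f1 t| ≤ F1)
    (hb2 : ∀ t ∈ Set.Icc (0:ℝ) h, |f2 t| ≤ F2) :
    ‖Ug1 H1 H2 f1 f2 h 0 - U h 0‖ ≤ (1/2) * F1 * F2 * ‖matComm H1 H2‖ * h^2 := by
  calc ‖Ug1 H1 H2 f1 f2 h 0 - U h 0‖ ≤ ∫ s in 0..h, F1 * F2 * ‖matComm H1 H2‖ * s :=
        norm_sub_le_integral_of_schrodinger (H := Ham H1 H2 f1 f2) (W := fun t => U t 0)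
          (V := fun t => Ug1 H1 H2 f1 f2 t 0) (isSelfAdjoint_ham hH1 hH2) (hU.2 0)
          (hasDerivAt_ug1 hf1.continuous hf2.continuous) (hU.1 0) (ug1_self H1 H2 f1 f2 0) hh.le
          (fun s hs => norm_ug1Defect_le_mul hH1 hH2 hs.1.le (hb1 s (Set.Ioc_subset_Icc_self hs))
            fun t ht => hb2 t ⟨ht.1.le, ht.2.trans hs.2⟩)
          ((continuous_const_mul _).intervalIntegrable 0 h)
    _ = (1/2) * F1 * F2 * ‖matComm H1 H2‖ * h^2 := by
        rw [intervalIntegral.integral_const_mul, integral_id]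
        ring

/-- **Operator norm error of one first-order generalized Trotter step.** -/
theorem opnorm_error_first_order_generalized_Trotter_step
    {n : ℕ} (hn : 0 < n) (H1 H2 : Mat n)
    (hH1 : H1.IsHermitian) (hH2 : H2.IsHermitian)
    (f1 f2 : ℝ → ℝ) (hf1 : ContDiff ℝ 1 f1) (hf2 : ContDiff ℝ 1 f2)
    (U : ℝ → ℝ → Mat n) (hU : IsEvolution H1 H2 f1 f2 U)
    (h : ℝ) (hh : 0 < h)
    (F1 F2 : ℝ) (hF1 : 0 ≤ F1) (hF2 : 0 ≤ F2)
    (hb1 : ∀ t ∈ Set.Icc (0:ℝ) h, |f1 t| ≤ F1)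
    (hb2 : ∀ t ∈ Set.Icc (0:ℝ) h, |f2 t| ≤ F2) :
    ‖Ug1 H1 H2 f1 f2 h 0 - U h 0‖ ≤ (1/2) * F1 * F2 * ‖matComm H1 H2‖ * h^2 :=
  opnorm_error_first_order_generalized_Trotter_step_general H1 H2 hH1 hH2 f1 f2 hf1 hf2 U hU h hh F1
    F2 hb1 hb2
end
end
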